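/- Let E(f) = ½‖G‖² + ½(f*kf + 2Re(f*·G) − p)·² + f*(½|k|²+|k|)f and let f_p be a critical point with u_p = p − f_p*kf_p − 2Re(f_p*·G). Then for every f in the form domain, E(f_p + f) = E(f_p) + f*(½|k|² + |k| − u_p·k)f + ½(f*kf + 2Re(f_p*kf) + 2Re(f*·G))·². In particular, if |u_p| < 1 then f_p is a global minimizer. -/

import Mathlib

open scoped InnerProductSpace

/-- A triple of reals viewed as a vector in Euclidean `ℝ³`. -/
noncomputable def vec3 (m : Fin 3 → ℝ) : EuclideanSpace ℝ (Fin 3) :=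
  (WithLp.equiv 2 (Fin 3 → ℝ)).symm m

/-- The coherent-state energy functional
`E(f) = ½‖G‖² + ½(f*kf + 2Re(f*·G) − p)·² + f*(½|k|²+|k|)f`. -/
noncomputable def coherentEnergy {Z : Type*} [NormedAddCommGroup Z] [InnerProductSpace ℂ Z]
    (G : Fin 3 → Z) (K : Fin 3 → Z →L[ℂ] Z) (T : Z →L[ℂ] Z)
    (p : EuclideanSpace ℝ (Fin 3)) (f : Z) : ℝ :=
  (1/2) * ∑ j, ‖G j‖ ^ 2
    + (1/2) * ‖vec3 (fun j => (inner ℂ f (K j f) : ℂ).re + 2 * (inner ℂ (G j) f : ℂ).re) - p‖ ^ 2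
    + (inner ℂ f (T f) : ℂ).re

lemma sa_inner {Z : Type*} [NormedAddCommGroup Z] [InnerProductSpace ℂ Z] [CompleteSpace Z]
    (T : Z →L[ℂ] Z) (hT : IsSelfAdjoint T) (x y : Z) :
    (inner ℂ (T x) y : ℂ) = inner ℂ x (T y) := by
  have h := ContinuousLinearMap.adjoint_inner_left T y x
  rwa [ContinuousLinearMap.isSelfAdjoint_iff'.mp hT] at h

lemma sa_re_symm {Z : Type*} [NormedAddCommGroup Z] [InnerProductSpace ℂ Z] [CompleteSpace Z]
    (T : Z →L[ℂ] Z) (hT : IsSelfAdjoint T) (x y : Z) :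
    (inner ℂ x (T y) : ℂ).re = (inner ℂ y (T x) : ℂ).re := by
  rw [← sa_inner T hT x y]
  have h : (inner ℂ y (T x) : ℂ) = (starRingEnd ℂ) (inner ℂ (T x) y : ℂ) :=
    (inner_conj_symm _ _).symm
  rw [h, Complex.conj_re]

lemma vec3_norm_sq (m : Fin 3 → ℝ) (p : EuclideanSpace ℝ (Fin 3)) :
    ‖vec3 m - p‖ ^ 2 = ∑ j, (m j - p j) ^ 2 := by
  rw [vec3, EuclideanSpace.norm_eq, Real.sq_sqrt (by positivity)]
  simp [Real.norm_eq_abs, sq_abs]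

lemma vec3_norm_sq' (m : Fin 3 → ℝ) : ‖vec3 m‖ ^ 2 = ∑ j, (m j) ^ 2 := by
  rw [vec3, EuclideanSpace.norm_eq, Real.sq_sqrt (by positivity)]
  simp [Real.norm_eq_abs, sq_abs]

/-- **Exact second-order expansion of the coherent energy around a critical point.** If `f_p`
is a critical point of `E`, i.e. `(½|k|²+|k|−u_p·k)f_p = u_p·G` with
`u_p = p − f_p*kf_p − 2Re(f_p*·G)`, then for every `f` one has
`E(f_p+f) = E(f_p) + f*(½|k|²+|k|−u_p·k)f + ½(f*kf + 2Re(f_p*kf) + 2Re(f*·G))·²`.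
In particular, if `½|k|²+|k|−u_p·k ≥ 0` (which holds when `|u_p| < 1`), `f_p` is a global
minimizer. -/
theorem coherent_energy_expansion
    {Z : Type*} [NormedAddCommGroup Z] [InnerProductSpace ℂ Z] [CompleteSpace Z]
    (G : Fin 3 → Z) (K : Fin 3 → Z →L[ℂ] Z) (T : Z →L[ℂ] Z)
    (hT : IsSelfAdjoint T) (hK : ∀ j, IsSelfAdjoint (K j))
    (p : EuclideanSpace ℝ (Fin 3)) (fp : Z) (u : EuclideanSpace ℝ (Fin 3))
    (hu : u = p - vec3 (fun j => (inner ℂ fp (K j fp) : ℂ).re + 2 * (inner ℂ (G j) fp : ℂ).re))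
    (hcrit : T fp = ∑ j, (u j : ℂ) • (K j fp + G j)) :
    (∀ f : Z,
      coherentEnergy G K T p (fp + f) =
        coherentEnergy G K T p fp
          + ((inner ℂ f (T f) : ℂ).re - ∑ j, u j * (inner ℂ f (K j f) : ℂ).re)
          + (1/2) * ‖vec3 (fun j => (inner ℂ f (K j f) : ℂ).re
              + 2 * (inner ℂ fp (K j f) : ℂ).re + 2 * (inner ℂ (G j) f : ℂ).re)‖ ^ 2) ∧
    ((∀ f : Z, ∑ j, u j * (inner ℂ f (K j f) : ℂ).re ≤ (inner ℂ f (T f) : ℂ).re) →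
      ∀ f : Z, coherentEnergy G K T p fp ≤ coherentEnergy G K T p f) := by
  have main : ∀ f : Z,
      coherentEnergy G K T p (fp + f) =
        coherentEnergy G K T p fp
          + ((inner ℂ f (T f) : ℂ).re - ∑ j, u j * (inner ℂ f (K j f) : ℂ).re)
          + (1/2) * ‖vec3 (fun j => (inner ℂ f (K j f) : ℂ).re
              + 2 * (inner ℂ fp (K j f) : ℂ).re + 2 * (inner ℂ (G j) f : ℂ).re)‖ ^ 2 := by
    intro f
    have hu' : ∀ j, u j = p j
        - ((inner ℂ fp (K j fp) : ℂ).re + 2 * (inner ℂ (G j) fp : ℂ).re) := by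
      intro j
      rw [hu]
      simp [vec3]
    have htpf : (inner ℂ fp (T f) : ℂ).re
        = ∑ j, u j * ((inner ℂ fp (K j f) : ℂ).re + (inner ℂ (G j) f : ℂ).re) := by
      rw [← sa_inner T hT fp f, hcrit, sum_inner]
      rw [Complex.re_sum]
      refine Finset.sum_congr rfl fun j _ => ?_
      rw [inner_smul_left, inner_add_left, Complex.conj_ofReal, sa_inner (K j) (hK j) fp f]
      rw [Complex.re_ofReal_mul, Complex.add_re]
    have hTe : (inner ℂ (fp + f) (T (fp + f)) : ℂ).re
        = (inner ℂ fp (T fp) : ℂ).re + 2 * (inner ℂ fp (T f) : ℂ).re + (inner ℂ f (T f) : ℂ).re := by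
      rw [map_add, inner_add_left, inner_add_right, inner_add_right]
      have := sa_re_symm T hT f fp
      simp only [Complex.add_re]
      linarith
    have hKe : ∀ j, (inner ℂ (fp + f) (K j (fp + f)) : ℂ).re
        = (inner ℂ fp (K j fp) : ℂ).re + 2 * (inner ℂ fp (K j f) : ℂ).re
          + (inner ℂ f (K j f) : ℂ).re := by
      intro j
      rw [map_add, inner_add_left, inner_add_right, inner_add_right]
      have := sa_re_symm (K j) (hK j) f fp
      simp only [Complex.add_re]
      linarith
    have hGe : ∀ j, (inner ℂ (G j) (fp + f) : ℂ).re
        = (inner ℂ (G j) fp : ℂ).re + (inner ℂ (G j) f : ℂ).re := by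
      intro j
      rw [inner_add_right, Complex.add_re]
    unfold coherentEnergy
    rw [vec3_norm_sq, vec3_norm_sq, vec3_norm_sq', hTe]
    simp only [hKe, hGe]
    simp only [Fin.sum_univ_three] at htpf ⊢
    rw [htpf, hu' 0, hu' 1, hu' 2]
    ring
  refine ⟨main, fun hpos f => ?_⟩
  have h := main (f - fp)
  rw [add_sub_cancel] at h
  rw [h]
  have h1 : 0 ≤ (inner ℂ (f - fp) (T (f - fp)) : ℂ).re
      - ∑ j, u j * (inner ℂ (f - fp) (K j (f - fp)) : ℂ).re :=
    sub_nonneg.mpr (hpos (f - fp))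
  have h2 : (0:ℝ) ≤ ‖vec3 (fun j => (inner ℂ (f - fp) (K j (f - fp)) : ℂ).re
      + 2 * (inner ℂ fp (K j (f - fp)) : ℂ).re + 2 * (inner ℂ (G j) (f - fp) : ℂ).re)‖ ^ 2 :=
    by positivity
  linarith
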